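/- arXiv:1910.02063 — 2 statements merged into one kernel-verified Lean document; each statement's English description precedes it below -/
import Mathlib

section
/- Let Δ and φ be natural numbers with φ ≤ Δ. Let C be a finite set (of 'colors') with |C| = Δ + 1, let U ⊆ C be a subset with |U| ≤ Δ − φ, let D be a finite set with |D| = φ, and let f : D → C. Then the set of colors c ∈ C \ U such that at most one element of D is mapped by f to c has cardinality at least φ/2 + 1; precisely, 2 · |{c ∈ C \ U : |{d ∈ D : f d = c}| ≤ 1}| ≥ φ + 2. -/
/-- Palette-size bound (Invariant 3.1 / Lemma 3.2): with `|C| = Δ+1` colors,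
`U ⊆ C` the up-neighbor colors with `|U| ≤ Δ - φ`, and `f` the coloring of the
`φ` down-neighbors `D`, the set of colors in `C \ U` used by at most one
down-neighbor has size at least `φ/2 + 1`, i.e. `2·|…| ≥ φ + 2`. -/
theorem stmt_0 {α β : Type*} [DecidableEq α] [DecidableEq β]
    (Δ φ : ℕ) (hφΔ : φ ≤ Δ)
    (C U : Finset α) (hC : C.card = Δ + 1) (hUC : U ⊆ C) (hU : U.card ≤ Δ - φ)
    (D : Finset β) (hD : D.card = φ) (f : β → α) :
    φ + 2 ≤
      2 * ((C \ U).filter (fun c => (D.filter (fun d => f d = c)).card ≤ 1)).card := by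
  classical
  set S := C \ U with hS
  have hScard : φ + 1 ≤ S.card := by
    have h1 : S.card = C.card - U.card := Finset.card_sdiff_of_subset hUC
    omega
  have hsum : ∑ c ∈ S, (D.filter (fun d => f d = c)).card ≤ φ := by
    have key : ∑ c ∈ S, ((D.filter (fun d => f d ∈ S)).filter (fun d => f d = c)).card
        = (D.filter (fun d => f d ∈ S)).card :=
      (Finset.card_eq_sum_card_fiberwise (fun x hx => (Finset.mem_filter.mp hx).2)).symm
    have heq : ∀ c ∈ S, ((D.filter (fun d => f d ∈ S)).filter (fun d => f d = c))
        = D.filter (fun d => f d = c) := by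
      intro c hc
      ext d
      simp only [Finset.mem_filter]
      constructor
      · tauto
      · rintro ⟨hd, he⟩; exact ⟨⟨hd, he ▸ hc⟩, he⟩
    calc ∑ c ∈ S, (D.filter (fun d => f d = c)).card
        = ∑ c ∈ S, ((D.filter (fun d => f d ∈ S)).filter (fun d => f d = c)).card :=
          (Finset.sum_congr rfl fun c hc => by rw [heq c hc]).symm
      _ = (D.filter (fun d => f d ∈ S)).card := key
      _ ≤ D.card := Finset.card_filter_le _ _
      _ = φ := hD
  set P := fun c => (D.filter (fun d => f d = c)).card ≤ 1 with hP
  have hsplit : (S.filter P).card + (S.filter (fun c => ¬ P c)).card = S.card :=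
    Finset.card_filter_add_card_filter_not (p := P)
  have hbad : 2 * (S.filter (fun c => ¬ P c)).card ≤ φ := by
    calc 2 * (S.filter (fun c => ¬ P c)).card
        = ∑ _c ∈ S.filter (fun c => ¬ P c), 2 := by
          rw [Finset.sum_const, smul_eq_mul, mul_comm]
      _ ≤ ∑ c ∈ S.filter (fun c => ¬ P c), (D.filter (fun d => f d = c)).card :=
          Finset.sum_le_sum (fun c hc => by
            have := (Finset.mem_filter.mp hc).2
            simp only [hP, not_le] at this
            omega)
      _ ≤ ∑ c ∈ S, (D.filter (fun d => f d = c)).card :=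
          Finset.sum_le_sum_of_subset (Finset.filter_subset _ _)
      _ ≤ φ := hsum
  have hgoal : (S.filter (fun c => (D.filter (fun d => f d = c)).card ≤ 1)) = S.filter P := rfl
  rw [hgoal]
  omega
end

section
/- Let (Ω, μ) be a probability space, let q be a natural number, let B : Fin q → Set Ω be measurable sets, and let e denote Euler's number (Real.exp 1). Assume that for every index i : Fin q and every finite set S of indices all strictly smaller than i, μ(B i ∩ ⋂_{k ∈ S} B k) ≤ (1/(16e)) · μ(⋂_{k ∈ S} B k). Then μ({ω : q ≤ 4 · |{i : ω ∈ B i}|}) ≤ (4/3) · (1/√2)^q, i.e., the probability that at least a 1/4-fraction of the q events occur is at most (4/3) · 2^{−q/2}. -/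
/-!
Multiplying the conditional bounds along the order of the indices shows that any `m` of the
events occur simultaneously with probability at most `p ^ m`, where `p = 1/(16e)`. A union bound
over the `m`-subsets, with `m = ⌈q/4⌉`, then gives the bound `q.choose m * p ^ m`, and
`q.choose m ≤ (e q / m) ^ m` turns this into `(q / (16 m)) ^ m ≤ 4 ^ (-m) ≤ 2 ^ (-q/2)`.
-/

open MeasureTheory

theorem Nat.choose_le_exp_one_mul_div_pow (n k : ℕ) :
    (n.choose k : ℝ) ≤ (Real.exp 1 * n / k) ^ k := by
  have hk : (k : ℝ) ^ k ≤ Real.exp 1 ^ k * k.factorial := by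
    rw [← div_le_iff₀ (by positivity), Real.exp_one_pow]
    exact Real.pow_div_factorial_le_exp _ k.cast_nonneg k
  calc (n.choose k : ℝ) ≤ (n : ℝ) ^ k / k.factorial := Nat.choose_le_pow_div k n
    _ ≤ (Real.exp 1 * n) ^ k / (k : ℝ) ^ k := by
      rcases k.eq_zero_or_pos with rfl | hk_pos
      · simp
      rw [div_le_div_iff₀ (by positivity) (by positivity), mul_pow]
      calc (n : ℝ) ^ k * (k : ℝ) ^ k ≤ n ^ k * (Real.exp 1 ^ k * k.factorial) := by gcongr
        _ = Real.exp 1 ^ k * n ^ k * k.factorial := by ring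
    _ = (Real.exp 1 * n / k) ^ k := (div_pow _ _ _).symm

theorem choose_mul_pow_le_quarter_pow {q m : ℕ} (hqm : q ≤ 4 * m) :
    (q.choose m : ℝ) * (1 / (16 * Real.exp 1)) ^ m ≤ (1 / 4) ^ m := by
  have hbase : Real.exp 1 * q / m * (1 / (16 * Real.exp 1)) = q / (16 * m) := by
    field_simp
  calc (q.choose m : ℝ) * (1 / (16 * Real.exp 1)) ^ m
      ≤ (Real.exp 1 * q / m) ^ m * (1 / (16 * Real.exp 1)) ^ m := by
        gcongr; exact Nat.choose_le_exp_one_mul_div_pow q m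
    _ = (q / (16 * m)) ^ m := by rw [← mul_pow, hbase]
    _ ≤ (1 / 4) ^ m := by
        refine pow_le_pow_left₀ (by positivity)
          (div_le_of_le_mul₀ (by positivity) (by norm_num) ?_) m
        have : (q : ℝ) ≤ 4 * m := by exact_mod_cast hqm
        linarith

theorem quarter_pow_le_inv_sqrt_two_pow {q m : ℕ} (hqm : q ≤ 4 * m) :
    (1 / 4 : ℝ) ^ m ≤ (1 / Real.sqrt 2) ^ q := by
  have hquarter : (1 / 4 : ℝ) = (1 / Real.sqrt 2) ^ 4 := by
    rw [show 4 = 2 * 2 by rfl, pow_mul, div_pow, one_pow, Real.sq_sqrt zero_le_two]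
    norm_num
  rw [hquarter, ← pow_mul]
  refine pow_le_pow_of_le_one (by positivity) ?_ hqm
  rw [div_le_one (by positivity)]
  exact Real.one_lt_sqrt_two.le

section

variable {Ω ι : Type*} [MeasurableSpace Ω] (μ : Measure Ω) (B : ι → Set Ω)

theorem measure_biInter_le_pow_card [IsZeroOrProbabilityMeasure μ] [LinearOrder ι]
    {p : ENNReal} (h : ∀ (i : ι) (S : Finset ι), (∀ k ∈ S, k < i) →
      μ (B i ∩ ⋂ k ∈ S, B k) ≤ p * μ (⋂ k ∈ S, B k)) (T : Finset ι) :
    μ (⋂ k ∈ T, B k) ≤ p ^ T.card := by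
  induction T using Finset.induction_on_max with
  | empty => simpa using prob_le_one
  | insert a s hlt ih =>
    rw [Finset.card_insert_of_notMem fun ha => (hlt a ha).false, Finset.set_biInter_insert,
      pow_succ']
    exact (h a s hlt).trans (mul_le_mul_right ih p)

theorem measure_le_ncard_setOf_mem_le [Fintype ι] {m : ℕ} {c : ENNReal}
    (hc : ∀ T : Finset ι, T.card = m → μ (⋂ k ∈ T, B k) ≤ c) :
    μ {ω | m ≤ {i | ω ∈ B i}.ncard} ≤ (Fintype.card ι).choose m * c := by
  classical
  have hsub : {ω | m ≤ {i | ω ∈ B i}.ncard} ⊆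
      ⋃ T ∈ Finset.powersetCard m Finset.univ, ⋂ k ∈ T, B k := by
    intro ω hω
    rw [Set.mem_ofPred_eq, Set.ncard_eq_toFinset_card'] at hω
    obtain ⟨T, hT, hTcard⟩ := Finset.exists_subset_card_eq hω
    refine Set.mem_biUnion (Finset.mem_powersetCard.2 ⟨Finset.subset_univ T, hTcard⟩) ?_
    exact Set.mem_iInter₂.2 fun k hk => by simpa using hT hk
  calc μ {ω | m ≤ {i | ω ∈ B i}.ncard}
      ≤ ∑ T ∈ Finset.powersetCard m Finset.univ, μ (⋂ k ∈ T, B k) :=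
        (measure_mono hsub).trans (measure_biUnion_finset_le _ _)
    _ ≤ ∑ _T ∈ Finset.powersetCard m (Finset.univ : Finset ι), c :=
        Finset.sum_le_sum fun T hT => hc T (Finset.mem_powersetCard.1 hT).2
    _ = (Fintype.card ι).choose m * c := by
        rw [Finset.sum_const, Finset.card_powersetCard, Finset.card_univ, nsmul_eq_mul]

end

theorem stmt_1_general {Ω : Type*} [MeasurableSpace Ω] (μ : Measure Ω) [IsProbabilityMeasure μ]
    (q : ℕ) (B : Fin q → Set Ω)
    (h : ∀ (i : Fin q) (S : Finset (Fin q)), (∀ k ∈ S, k < i) →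
      μ (B i ∩ ⋂ k ∈ S, B k) ≤
        ENNReal.ofReal (1 / (16 * Real.exp 1)) * μ (⋂ k ∈ S, B k)) :
    μ {ω | q ≤ 4 * {i : Fin q | ω ∈ B i}.ncard} ≤
      ENNReal.ofReal ((4 / 3) * (1 / Real.sqrt 2) ^ q) := by
  set m := (q + 3) / 4
  have hqm : q ≤ 4 * m := by omega
  have hintersections := measure_biInter_le_pow_card μ B h
  calc μ {ω | q ≤ 4 * {i : Fin q | ω ∈ B i}.ncard}
      ≤ μ {ω | m ≤ {i : Fin q | ω ∈ B i}.ncard} := measure_mono fun ω hω => by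
        simp only [Set.mem_ofPred_eq] at hω ⊢; omega
    _ ≤ q.choose m * ENNReal.ofReal (1 / (16 * Real.exp 1)) ^ m := by
        simpa only [Fintype.card_fin] using
          measure_le_ncard_setOf_mem_le μ B fun T hT => hT ▸ hintersections T
    _ = ENNReal.ofReal (q.choose m * (1 / (16 * Real.exp 1)) ^ m) := by
        rw [ENNReal.ofReal_mul (by positivity), ENNReal.ofReal_pow (by positivity),
          ENNReal.ofReal_natCast]
    _ ≤ ENNReal.ofReal ((4 / 3) * (1 / Real.sqrt 2) ^ q) := by
        refine ENNReal.ofReal_le_ofReal ?_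
        have := (choose_mul_pow_le_quarter_pow hqm).trans (quarter_pow_le_inv_sqrt_two_pow hqm)
        have : 0 ≤ (1 / Real.sqrt 2) ^ q := by positivity
        linarith

/-- Abstract core of Lemma 3.8: given `q` events `B i`, each occurring with
probability at most `1/(16e)` conditioned on any collection of earlier events
occurring, the probability that at least a `1/4`-fraction of them occur is at
most `(4/3)·2^{-q/2}`. -/
theorem stmt_1 {Ω : Type*} [MeasurableSpace Ω] (μ : Measure Ω) [IsProbabilityMeasure μ]
    (q : ℕ) (B : Fin q → Set Ω) (hB : ∀ i, MeasurableSet (B i))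
    (h : ∀ (i : Fin q) (S : Finset (Fin q)), (∀ k ∈ S, k < i) →
      μ (B i ∩ ⋂ k ∈ S, B k) ≤
        ENNReal.ofReal (1 / (16 * Real.exp 1)) * μ (⋂ k ∈ S, B k)) :
    μ {ω | q ≤ 4 * {i : Fin q | ω ∈ B i}.ncard} ≤
      ENNReal.ofReal ((4 / 3) * (1 / Real.sqrt 2) ^ q) :=
  stmt_1_general μ q B h
end
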